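/- arXiv:math/0110273 — 4 statements merged into one kernel-verified Lean document; each statement's English description precedes it below -/
import Mathlib

section
/- Let 𝒞 be a category and suppose (𝒜, ℬ, 𝒞ᶜ, 𝒟) and (𝒜', ℬ', 𝒞ᶜ', 𝒟') are two admissible decompositions of 𝒞. Then 𝒜 = 𝒜', 𝒟 = 𝒟', and either (ℬ = ℬ' and 𝒞ᶜ = 𝒞ᶜ') or (ℬ = 𝒞ᶜ' and 𝒞ᶜ = ℬ'); i.e., the admissible decomposition is unique up to permutation of the two middle factors ℬ and 𝒞ᶜ. -/
open CategoryTheory CategoryTheory.Limits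

/-- An admissible decomposition of a category `C`: four nonempty, saturated
(isomorphism-closed) classes of objects `A, B, Cc, D` which partition the
objects of `C` (pairwise disjoint with union everything), such that
(dec₁) every object of `A` is initial, (dec₂) there are no morphisms from
`Cc ∪ D` to `B`, (dec₃) there are no morphisms from `B ∪ D` to `Cc`,
(dec₄) there is a morphism from any object of `B` to any object of `B ∪ D`,
and (dec₅) there is a morphism from any object of `Cc` to any object of
`Cc ∪ D`. -/
structure AdmissibleDecomposition (C : Type*) [Category C]
    (A B Cc D : Set C) : Prop where
  nonemptyA : A.Nonempty
  nonemptyB : B.Nonempty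
  nonemptyC : Cc.Nonempty
  nonemptyD : D.Nonempty
  satA : ∀ x y : C, x ∈ A → Nonempty (x ≅ y) → y ∈ A
  satB : ∀ x y : C, x ∈ B → Nonempty (x ≅ y) → y ∈ B
  satC : ∀ x y : C, x ∈ Cc → Nonempty (x ≅ y) → y ∈ Cc
  satD : ∀ x y : C, x ∈ D → Nonempty (x ≅ y) → y ∈ D
  union : A ∪ B ∪ Cc ∪ D = Set.univ
  disjAB : Disjoint A B
  disjAC : Disjoint A Cc
  disjAD : Disjoint A D
  disjBC : Disjoint B Cc
  disjBD : Disjoint B D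
  disjCD : Disjoint Cc D
  dec1 : ∀ x ∈ A, Nonempty (IsInitial x)
  dec2 : ∀ x ∈ Cc ∪ D, ∀ y ∈ B, IsEmpty (x ⟶ y)
  dec3 : ∀ x ∈ B ∪ D, ∀ y ∈ Cc, IsEmpty (x ⟶ y)
  dec4 : ∀ x ∈ B, ∀ y ∈ B ∪ D, Nonempty (x ⟶ y)
  dec5 : ∀ x ∈ Cc, ∀ y ∈ Cc ∪ D, Nonempty (x ⟶ y)

section Aux
variable {C : Type*} [Category C] {A B Cc D : Set C}

lemma AD_cases (h : AdmissibleDecomposition C A B Cc D) (x : C) :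
    x ∈ A ∨ x ∈ B ∨ x ∈ Cc ∨ x ∈ D := by
  have hx : x ∈ A ∪ B ∪ Cc ∪ D := h.union ▸ Set.mem_univ x
  simpa [Set.mem_union, or_assoc] using hx

lemma AD_eqA (h : AdmissibleDecomposition C A B Cc D) :
    A = {x : C | Nonempty (IsInitial x)} := by
  ext x
  constructor
  · exact fun hx => h.dec1 x hx
  · rintro ⟨hi⟩
    obtain ⟨b, hb⟩ := h.nonemptyB
    obtain ⟨c, hc⟩ := h.nonemptyC
    rcases AD_cases h x with hA | hB | hC | hD
    · exact hA
    · exact ((h.dec3 x (Or.inl hB) c hc).false (hi.to c)).elim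
    · exact ((h.dec2 x (Or.inl hC) b hb).false (hi.to b)).elim
    · exact ((h.dec3 x (Or.inr hD) c hc).false (hi.to c)).elim

/-- the intrinsic predicate characterizing `D` -/
def ADP (x : C) : Prop :=
  ∃ u v : C, ¬ Nonempty (IsInitial u) ∧ ¬ Nonempty (IsInitial v) ∧
    IsEmpty (u ⟶ v) ∧ IsEmpty (v ⟶ u) ∧ Nonempty (u ⟶ x) ∧ Nonempty (v ⟶ x)

lemma AD_eqD (h : AdmissibleDecomposition C A B Cc D) :
    D = {x : C | ADP x} := by
  obtain ⟨b, hb⟩ := h.nonemptyB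
  obtain ⟨c, hc⟩ := h.nonemptyC
  have hbni : ¬ Nonempty (IsInitial b) := by
    rintro ⟨hi⟩
    exact (h.dec3 b (Or.inl hb) c hc).false (hi.to c)
  have hcni : ¬ Nonempty (IsInitial c) := by
    rintro ⟨hi⟩
    exact (h.dec2 c (Or.inl hc) b hb).false (hi.to b)
  ext x
  constructor
  · intro hx
    exact ⟨b, c, hbni, hcni, h.dec3 b (Or.inl hb) c hc,
      h.dec2 c (Or.inl hc) b hb, h.dec4 b hb x (Or.inr hx),
      h.dec5 c hc x (Or.inr hx)⟩
  · rintro ⟨u, v, hu, hv, huv, hvu, ⟨f⟩, ⟨g⟩⟩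
    -- no non-initial object maps to an initial object
    have key : ∀ w y : C, ¬ Nonempty (IsInitial w) → (w ⟶ y) →
        Nonempty (IsInitial y) → False := by
      rintro w y hw k ⟨hi⟩
      rcases AD_cases h w with hA | hB | hC | hD
      · exact hw (h.dec1 w hA)
      · exact (h.dec3 w (Or.inl hB) c hc).false (k ≫ hi.to c)
      · exact (h.dec2 w (Or.inl hC) b hb).false (k ≫ hi.to b)
      · exact (h.dec3 w (Or.inr hD) c hc).false (k ≫ hi.to c)
    rcases AD_cases h x with hA | hB | hC | hD
    · exact (key u x hu f (h.dec1 x hA)).elim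
    · -- u and v both must be in B, contradiction with dec4
      have hu' : u ∈ B := by
        rcases AD_cases h u with h1 | h1 | h1 | h1
        · exact absurd (h.dec1 u h1) hu
        · exact h1
        · exact ((h.dec2 u (Or.inl h1) x hB).false f).elim
        · exact ((h.dec2 u (Or.inr h1) x hB).false f).elim
      have hv' : v ∈ B := by
        rcases AD_cases h v with h1 | h1 | h1 | h1
        · exact absurd (h.dec1 v h1) hv
        · exact h1
        · exact ((h.dec2 v (Or.inl h1) x hB).false g).elim
        · exact ((h.dec2 v (Or.inr h1) x hB).false g).elim
      obtain ⟨k⟩ := h.dec4 u hu' v (Or.inl hv')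
      exact (huv.false k).elim
    · have hu' : u ∈ Cc := by
        rcases AD_cases h u with h1 | h1 | h1 | h1
        · exact absurd (h.dec1 u h1) hu
        · exact ((h.dec3 u (Or.inl h1) x hC).false f).elim
        · exact h1
        · exact ((h.dec3 u (Or.inr h1) x hC).false f).elim
      have hv' : v ∈ Cc := by
        rcases AD_cases h v with h1 | h1 | h1 | h1
        · exact absurd (h.dec1 v h1) hv
        · exact ((h.dec3 v (Or.inl h1) x hC).false g).elim
        · exact h1
        · exact ((h.dec3 v (Or.inr h1) x hC).false g).elim
      obtain ⟨k⟩ := h.dec5 u hu' v (Or.inl hv')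
      exact (huv.false k).elim
    · exact hD

end Aux

/-- Uniqueness of the admissible decomposition up to permutation of the two
middle factors `B` and `Cc`. -/
theorem admissibleDecomposition_unique {C : Type*} [Category C]
    {A B Cc D A' B' Cc' D' : Set C}
    (h : AdmissibleDecomposition C A B Cc D)
    (h' : AdmissibleDecomposition C A' B' Cc' D') :
    A = A' ∧ D = D' ∧ ((B = B' ∧ Cc = Cc') ∨ (B = Cc' ∧ Cc = B')) := by
  have hA : A = A' := (AD_eqA h).trans (AD_eqA h').symm
  have hD : D = D' := (AD_eqD h).trans (AD_eqD h').symm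
  refine ⟨hA, hD, ?_⟩
  obtain ⟨b, hb⟩ := h.nonemptyB
  -- b is not in A' or D'
  have hbA : b ∉ A' := by
    rw [← hA]
    exact Set.disjoint_left.mp h.disjAB.symm hb
  have hbD : b ∉ D' := by
    rw [← hD]
    exact Set.disjoint_left.mp h.disjBD hb
  -- membership criterion: for x in the middle, x ∈ B iff Hom(b,x) nonempty
  have critB : ∀ x : C, x ∈ B ∪ Cc → (x ∈ B ↔ Nonempty (b ⟶ x)) := by
    rintro x hx
    constructor
    · intro hxB; exact h.dec4 b hb x (Or.inl hxB)
    · rintro ⟨f⟩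
      rcases hx with hx | hx
      · exact hx
      · exact ((h.dec3 b (Or.inl hb) x hx).false f).elim
  -- same criterion for the primed decomposition, depending on where b lands
  have hmidEq : B ∪ Cc = B' ∪ Cc' := by
    ext x
    have c1 := AD_cases h x
    have c2 := AD_cases h' x
    rw [← hA, ← hD] at c2
    constructor
    · intro hx
      rcases c2 with h1 | h1 | h1 | h1
      · exact absurd hx (by
          rcases hx with hx | hx
          · exact fun _ => Set.disjoint_left.mp h.disjAB h1 hx
          · exact fun _ => Set.disjoint_left.mp h.disjAC h1 hx)
      · exact Or.inl h1
      · exact Or.inr h1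
      · exact absurd hx (by
          rcases hx with hx | hx
          · exact fun _ => Set.disjoint_left.mp h.disjBD hx h1
          · exact fun _ => Set.disjoint_left.mp h.disjCD hx h1)
    · intro hx
      rcases c1 with h1 | h1 | h1 | h1
      · refine absurd hx ?_
        rw [hA] at h1
        rcases hx with hx | hx
        · exact fun _ => Set.disjoint_left.mp h'.disjAB h1 hx
        · exact fun _ => Set.disjoint_left.mp h'.disjAC h1 hx
      · exact Or.inl h1
      · exact Or.inr h1
      · refine absurd hx ?_
        rw [hD] at h1
        rcases hx with hx | hx
        · exact fun _ => Set.disjoint_left.mp h'.disjBD hx h1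
        · exact fun _ => Set.disjoint_left.mp h'.disjCD hx h1
  have hbmid : b ∈ B' ∪ Cc' := hmidEq ▸ (Or.inl hb : b ∈ B ∪ Cc)
  rcases hbmid with hbB' | hbC'
  · left
    have critB' : ∀ x : C, x ∈ B' ∪ Cc' → (x ∈ B' ↔ Nonempty (b ⟶ x)) := by
      rintro x hx
      constructor
      · intro hxB; exact h'.dec4 b hbB' x (Or.inl hxB)
      · rintro ⟨f⟩
        rcases hx with hx | hx
        · exact hx
        · exact ((h'.dec3 b (Or.inl hbB') x hx).false f).elim
    have hBB' : B = B' := by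
      ext x
      constructor
      · intro hx
        exact (critB' x (hmidEq ▸ (Or.inl hx : x ∈ B ∪ Cc))).mpr
          ((critB x (Or.inl hx)).mp hx)
      · intro hx
        have hxmid : x ∈ B ∪ Cc := hmidEq ▸ Or.inl hx
        exact (critB x hxmid).mpr ((critB' x (Or.inl hx)).mp hx)
    refine ⟨hBB', ?_⟩
    ext x
    constructor
    · intro hx
      have : x ∈ B' ∪ Cc' := hmidEq ▸ Or.inr hx
      rcases this with h1 | h1
      · exact absurd (hBB' ▸ h1) (Set.disjoint_left.mp h.disjBC.symm hx)
      · exact h1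
    · intro hx
      have : x ∈ B ∪ Cc := hmidEq ▸ Or.inr hx
      rcases this with h1 | h1
      · exact absurd (hBB' ▸ h1 : x ∈ B') (Set.disjoint_left.mp h'.disjBC.symm hx)
      · exact h1
  · right
    have critC' : ∀ x : C, x ∈ B' ∪ Cc' → (x ∈ Cc' ↔ Nonempty (b ⟶ x)) := by
      rintro x hx
      constructor
      · intro hxC; exact h'.dec5 b hbC' x (Or.inl hxC)
      · rintro ⟨f⟩
        rcases hx with hx | hx
        · exact ((h'.dec2 b (Or.inl hbC') x hx).false f).elim
        · exact hx
    have hBC' : B = Cc' := by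
      ext x
      constructor
      · intro hx
        exact (critC' x (hmidEq ▸ (Or.inl hx : x ∈ B ∪ Cc))).mpr
          ((critB x (Or.inl hx)).mp hx)
      · intro hx
        have hxmid : x ∈ B ∪ Cc := hmidEq ▸ Or.inr hx
        exact (critB x hxmid).mpr ((critC' x (Or.inr hx)).mp hx)
    refine ⟨hBC', ?_⟩
    ext x
    constructor
    · intro hx
      have : x ∈ B' ∪ Cc' := hmidEq ▸ Or.inr hx
      rcases this with h1 | h1
      · exact h1
      · exact absurd (hBC' ▸ h1 : x ∈ B) (Set.disjoint_left.mp h.disjBC.symm hx)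
    · intro hx
      have : x ∈ B ∪ Cc := hmidEq ▸ Or.inl hx
      rcases this with h1 | h1
      · exact absurd (hBC' ▸ h1 : x ∈ Cc') (Set.disjoint_left.mp h'.disjBC hx)
      · exact h1
end

section
/- Let 𝒞 be a category and suppose (𝒜, ℬ, 𝒞ᶜ, 𝒟) and (𝒜', ℬ', 𝒞ᶜ', 𝒟') are two admissible decompositions of 𝒞. Then every object of ℬ belongs to ℬ' ∪ 𝒞ᶜ'; that is, no object of ℬ can lie in 𝒜' or in 𝒟'. -/
open CategoryTheory CategoryTheory.Limits

/-- Given two admissible decompositions, every object of `B` belongs to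
`B' ∪ Cc'`. -/
theorem admissibleDecomposition_B_subset {C : Type*} [Category C]
    {A B Cc D A' B' Cc' D' : Set C}
    (h : AdmissibleDecomposition C A B Cc D)
    (h' : AdmissibleDecomposition C A' B' Cc' D') :
    B ⊆ B' ∪ Cc' := by
  intro x hxB
  have hx : x ∈ A' ∪ B' ∪ Cc' ∪ D' := h'.union ▸ Set.mem_univ x
  rcases hx with ((hA' | hB') | hC') | hD'
  · exfalso
    obtain ⟨init⟩ := h'.dec1 x hA'
    obtain ⟨c, hc⟩ := h.nonemptyC
    exact (h.dec3 x (Or.inl hxB) c hc).false (init.to c)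
  · exact Or.inl hB'
  · exact Or.inr hC'
  · exfalso
    obtain ⟨b', hb'⟩ := h'.nonemptyB
    obtain ⟨f⟩ := h'.dec4 b' hb' x (Or.inr hD')
    have hb'B : b' ∈ B := by
      have hmem : b' ∈ A ∪ B ∪ Cc ∪ D := h.union ▸ Set.mem_univ b'
      rcases hmem with ((hA | hB) | hC) | hD
      · exfalso
        obtain ⟨init⟩ := h.dec1 b' hA
        obtain ⟨c', hc'⟩ := h'.nonemptyC
        exact (h'.dec3 b' (Or.inl hb') c' hc').false (init.to c')
      · exact hB
      · exact ((h.dec2 b' (Or.inl hC) x hxB).false f).elim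
      · exact ((h.dec2 b' (Or.inr hD) x hxB).false f).elim
    obtain ⟨g⟩ := h.dec4 x hxB b' (Or.inl hb'B)
    exact (h'.dec2 x (Or.inr hD') b' hb').false g
end

section
/- Let 𝒞 be a category and suppose (𝒜, ℬ, 𝒞ᶜ, 𝒟) and (𝒜', ℬ', 𝒞ᶜ', 𝒟') are two admissible decompositions of 𝒞. Then ℬ ∪ 𝒞ᶜ = ℬ' ∪ 𝒞ᶜ' and consequently 𝒟 = 𝒟'. -/
open CategoryTheory CategoryTheory.Limits

namespace AdmissibleDecompositionAux

variable {C : Type*} [Category C] {A B Cc D : Set C}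

lemma mem_cases (h : AdmissibleDecomposition C A B Cc D) (x : C) :
    x ∈ A ∨ x ∈ B ∨ x ∈ Cc ∨ x ∈ D := by
  have hx : x ∈ A ∪ B ∪ Cc ∪ D := h.union ▸ Set.mem_univ x
  simpa [Set.mem_union, or_assoc] using hx

lemma not_initial_of_mem_B (h : AdmissibleDecomposition C A B Cc D) {x : C}
    (hx : x ∈ B) : ¬ Nonempty (IsInitial x) := by
  rintro ⟨hI⟩
  obtain ⟨c, hc⟩ := h.nonemptyC
  exact (h.dec3 x (Or.inl hx) c hc).false (hI.to c)

lemma not_initial_of_mem_Cc (h : AdmissibleDecomposition C A B Cc D) {x : C}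
    (hx : x ∈ Cc) : ¬ Nonempty (IsInitial x) := by
  rintro ⟨hI⟩
  obtain ⟨b, hb⟩ := h.nonemptyB
  exact (h.dec2 x (Or.inl hx) b hb).false (hI.to b)

lemma not_initial_of_mem_D (h : AdmissibleDecomposition C A B Cc D) {x : C}
    (hx : x ∈ D) : ¬ Nonempty (IsInitial x) := by
  rintro ⟨hI⟩
  obtain ⟨b, hb⟩ := h.nonemptyB
  exact (h.dec2 x (Or.inr hx) b hb).false (hI.to b)

lemma A_eq_initial (h : AdmissibleDecomposition C A B Cc D) :
    A = {x : C | Nonempty (IsInitial x)} := by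
  ext x
  constructor
  · exact fun hx => h.dec1 x hx
  · intro hx
    rcases mem_cases h x with hA | hB | hC | hD
    · exact hA
    · exact absurd hx (not_initial_of_mem_B h hB)
    · exact absurd hx (not_initial_of_mem_Cc h hC)
    · exact absurd hx (not_initial_of_mem_D h hD)

/-- The intrinsic characterization of `D`. -/
def Dset (C : Type*) [Category C] : Set C :=
  {x : C | ¬ Nonempty (IsInitial x) ∧ ∃ y z : C, ¬ Nonempty (IsInitial y) ∧
    ¬ Nonempty (IsInitial z) ∧ Nonempty (y ⟶ x) ∧ Nonempty (z ⟶ x) ∧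
    IsEmpty (y ⟶ z) ∧ IsEmpty (z ⟶ y)}

lemma D_eq_Dset (h : AdmissibleDecomposition C A B Cc D) : D = Dset C := by
  ext x
  constructor
  · intro hx
    obtain ⟨b, hb⟩ := h.nonemptyB
    obtain ⟨c, hc⟩ := h.nonemptyC
    refine ⟨not_initial_of_mem_D h hx, b, c, not_initial_of_mem_B h hb,
      not_initial_of_mem_Cc h hc, h.dec4 b hb x (Or.inr hx),
      h.dec5 c hc x (Or.inr hx), h.dec3 b (Or.inl hb) c hc,
      h.dec2 c (Or.inl hc) b hb⟩
  · rintro ⟨hxI, y, z, hyI, hzI, ⟨f⟩, ⟨g⟩, hyz, hzy⟩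
    -- y and z are not in A
    have hyA : y ∉ A := fun hy => hyI ⟨(h.dec1 y hy).some⟩
    have hzA : z ∉ A := fun hz => hzI ⟨(h.dec1 z hz).some⟩
    rcases mem_cases h x with hA | hB | hC | hD
    · exact absurd ⟨(h.dec1 x hA).some⟩ hxI
    · -- then y, z ∈ B, contradicting hyz via dec4
      have hyB : y ∈ B := by
        rcases mem_cases h y with h1 | h1 | h1 | h1
        · exact absurd h1 hyA
        · exact h1
        · exact ((h.dec2 y (Or.inl h1) x hB).false f).elim
        · exact ((h.dec2 y (Or.inr h1) x hB).false f).elim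
      have hzB : z ∈ B := by
        rcases mem_cases h z with h1 | h1 | h1 | h1
        · exact absurd h1 hzA
        · exact h1
        · exact ((h.dec2 z (Or.inl h1) x hB).false g).elim
        · exact ((h.dec2 z (Or.inr h1) x hB).false g).elim
      exact (hyz.false (h.dec4 y hyB z (Or.inl hzB)).some).elim
    · -- then y, z ∈ Cc, contradicting hyz via dec5
      have hyC : y ∈ Cc := by
        rcases mem_cases h y with h1 | h1 | h1 | h1
        · exact absurd h1 hyA
        · exact ((h.dec3 y (Or.inl h1) x hC).false f).elim
        · exact h1
        · exact ((h.dec3 y (Or.inr h1) x hC).false f).elim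
      have hzC : z ∈ Cc := by
        rcases mem_cases h z with h1 | h1 | h1 | h1
        · exact absurd h1 hzA
        · exact ((h.dec3 z (Or.inl h1) x hC).false g).elim
        · exact h1
        · exact ((h.dec3 z (Or.inr h1) x hC).false g).elim
      exact (hyz.false (h.dec5 y hyC z (Or.inl hzC)).some).elim
    · exact hD

lemma mem_BC_iff (h : AdmissibleDecomposition C A B Cc D) (x : C) :
    x ∈ B ∪ Cc ↔ x ∉ A ∧ x ∉ D := by
  constructor
  · rintro (hx | hx)
    · exact ⟨Set.disjoint_right.mp h.disjAB hx,
        Set.disjoint_left.mp h.disjBD hx⟩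
    · exact ⟨Set.disjoint_right.mp h.disjAC hx,
        Set.disjoint_left.mp h.disjCD hx⟩
  · rintro ⟨hA, hD⟩
    rcases mem_cases h x with h1 | h1 | h1 | h1
    · exact absurd h1 hA
    · exact Or.inl h1
    · exact Or.inr h1
    · exact absurd h1 hD

end AdmissibleDecompositionAux

open AdmissibleDecompositionAux in
/-- Given two admissible decompositions, `B ∪ Cc = B' ∪ Cc'` and
consequently `D = D'`. -/
theorem admissibleDecomposition_middle_union_eq {C : Type*} [Category C]
    {A B Cc D A' B' Cc' D' : Set C}
    (h : AdmissibleDecomposition C A B Cc D)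
    (h' : AdmissibleDecomposition C A' B' Cc' D') :
    B ∪ Cc = B' ∪ Cc' ∧ D = D' := by
  have hD : D = D' := (D_eq_Dset h).trans (D_eq_Dset h').symm
  have hA : A = A' := (A_eq_initial h).trans (A_eq_initial h').symm
  refine ⟨?_, hD⟩
  ext x
  rw [mem_BC_iff h x, mem_BC_iff h' x, hA, hD]
end

section
/- Let 𝒞 be a category and suppose (𝒜, ℬ, 𝒞ᶜ, 𝒟) and (𝒜', ℬ', 𝒞ᶜ', 𝒟') are two admissible decompositions of 𝒞. If there exists an object x₀ with x₀ ∈ ℬ and x₀ ∈ ℬ', then 𝒞ᶜ = 𝒞ᶜ' and ℬ = ℬ'. -/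
open CategoryTheory CategoryTheory.Limits

/-- Given two admissible decompositions sharing an object `x₀ ∈ B ∩ B'`,
the middle factors agree: `Cc = Cc'` and `B = B'`. -/
theorem admissibleDecomposition_eq_of_common {C : Type*} [Category C]
    {A B Cc D A' B' Cc' D' : Set C}
    (h : AdmissibleDecomposition C A B Cc D)
    (h' : AdmissibleDecomposition C A' B' Cc' D')
    {x₀ : C} (hx₀ : x₀ ∈ B) (hx₀' : x₀ ∈ B') :
    Cc = Cc' ∧ B = B' := by
  have mem4 : ∀ (A B Cc D : Set C), A ∪ B ∪ Cc ∪ D = Set.univ →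
      ∀ x : C, x ∈ A ∨ x ∈ B ∨ x ∈ Cc ∨ x ∈ D := by
    intro A B Cc D hu x
    have hx : x ∈ A ∪ B ∪ Cc ∪ D := hu ▸ Set.mem_univ x
    simp only [Set.mem_union] at hx
    tauto
  have keyC : ∀ {A B Cc D A' B' Cc' D' : Set C},
      AdmissibleDecomposition C A B Cc D → AdmissibleDecomposition C A' B' Cc' D' →
      ∀ {x₀ : C}, x₀ ∈ B → x₀ ∈ B' → Cc' ⊆ Cc := by
    intro A B Cc D A' B' Cc' D' h h' x₀ hB hB' c hc
    rcases mem4 _ _ _ _ h.union c with hA | hBc | hCc | hD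
    · obtain ⟨init⟩ := h.dec1 c hA
      exact ((h'.dec2 c (Or.inl hc) x₀ hB').false (init.to x₀)).elim
    · exact ((h'.dec3 x₀ (Or.inl hB') c hc).false (h.dec4 x₀ hB c (Or.inl hBc)).some).elim
    · exact hCc
    · exact ((h'.dec3 x₀ (Or.inl hB') c hc).false (h.dec4 x₀ hB c (Or.inr hD)).some).elim
  have keyB : ∀ {A B Cc D A' B' Cc' D' : Set C},
      AdmissibleDecomposition C A B Cc D → AdmissibleDecomposition C A' B' Cc' D' →
      ∀ {x₀ : C}, x₀ ∈ B → x₀ ∈ B' → B ⊆ B' := by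
    intro A B Cc D A' B' Cc' D' h h' x₀ hB hB' b hb
    rcases mem4 _ _ _ _ h'.union b with hA | hBc | hCc | hD
    · obtain ⟨init⟩ := h'.dec1 b hA
      obtain ⟨c, hc⟩ := h.nonemptyC
      exact ((h.dec3 b (Or.inl hb) c hc).false (init.to c)).elim
    · exact hBc
    · exact ((h'.dec2 b (Or.inl hCc) x₀ hB').false (h.dec4 b hb x₀ (Or.inl hB)).some).elim
    · exact ((h'.dec2 b (Or.inr hD) x₀ hB').false (h.dec4 b hb x₀ (Or.inl hB)).some).elim
  exact ⟨le_antisymm (keyC h' h hx₀' hx₀) (keyC h h' hx₀ hx₀'),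
    le_antisymm (keyB h h' hx₀ hx₀') (keyB h' h hx₀' hx₀)⟩
end
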